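/- Let b > 0, γ > 0, and F_♯ as above. Then for every (s,t) ∈ ℝ², one has 0 ≤ 2·F_♯(s,t) ≤ ∇F_♯(s,t)·(s,t), and for all (s,t) with s⁴+2bs²t²+t⁴ ≥ γ² one has ∇F_♯(s,t)·(s,t) ≤ γ·((s²+bt²)s² + (t²+bs²)t²)/√(s⁴+2bs²t²+t⁴) ≤ 3γ·√(max{1,b})·(s²+t²)/2. -/
import Mathlib


/-- The quartic form `Q(s,t) = s⁴ + 2bs²t² + t⁴`. -/
def Qform (b s t : ℝ) : ℝ := s ^ 4 + 2 * b * s ^ 2 * t ^ 2 + t ^ 4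

/-- The penalized nonlinearity `F♯`. -/
noncomputable def Fsharp (b γ s t : ℝ) : ℝ :=
  if Qform b s t ≤ γ ^ 2 then (1 / 4) * Qform b s t
  else (γ / 2) * Real.sqrt (Qform b s t) - γ ^ 2 / 4

/-- `∇F♯(s,t)·(s,t)`, computed from the explicit formula for the gradient of `F♯`. -/
noncomputable def gradFsharpDot (b γ s t : ℝ) : ℝ :=
  if Qform b s t ≤ γ ^ 2 then (s ^ 2 + b * t ^ 2) * s ^ 2 + (t ^ 2 + b * s ^ 2) * t ^ 2
  else γ * ((s ^ 2 + b * t ^ 2) * s ^ 2 + (t ^ 2 + b * s ^ 2) * t ^ 2)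
      / Real.sqrt (Qform b s t)

/-- For `b, γ > 0`: for every `(s,t)`, `0 ≤ 2F♯(s,t) ≤ ∇F♯(s,t)·(s,t)`,
and whenever `s⁴+2bs²t²+t⁴ ≥ γ²`,
`∇F♯(s,t)·(s,t) ≤ γ((s²+bt²)s² + (t²+bs²)t²)/√(s⁴+2bs²t²+t⁴) ≤ (3γ/2)·√(max 1 b)·(s²+t²)`. -/
theorem stmt_2 (b γ : ℝ) (hb : 0 < b) (hγ : 0 < γ) :
    (∀ s t : ℝ, 0 ≤ 2 * Fsharp b γ s t ∧ 2 * Fsharp b γ s t ≤ gradFsharpDot b γ s t) ∧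
    (∀ s t : ℝ, γ ^ 2 ≤ Qform b s t →
      gradFsharpDot b γ s t ≤
          γ * ((s ^ 2 + b * t ^ 2) * s ^ 2 + (t ^ 2 + b * s ^ 2) * t ^ 2)
            / Real.sqrt (Qform b s t) ∧
      γ * ((s ^ 2 + b * t ^ 2) * s ^ 2 + (t ^ 2 + b * s ^ 2) * t ^ 2)
            / Real.sqrt (Qform b s t) ≤
        3 * γ * Real.sqrt (max 1 b) * (s ^ 2 + t ^ 2) / 2) := by
  have hQid : ∀ s t : ℝ, (s ^ 2 + b * t ^ 2) * s ^ 2 + (t ^ 2 + b * s ^ 2) * t ^ 2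
      = Qform b s t := by intro s t; unfold Qform; ring
  have hQ0 : ∀ s t : ℝ, 0 ≤ Qform b s t := by
    intro s t; unfold Qform; positivity
  constructor
  · intro s t
    unfold Fsharp gradFsharpDot
    by_cases h : Qform b s t ≤ γ ^ 2
    · simp only [h, if_true, hQid]
      exact ⟨by nlinarith [hQ0 s t], by nlinarith [hQ0 s t]⟩
    · simp only [h, if_false, hQid]
      have hlt : γ ^ 2 < Qform b s t := not_le.mp h
      have hs : γ ≤ Real.sqrt (Qform b s t) := by
        have := Real.sqrt_le_sqrt hlt.le
        rwa [Real.sqrt_sq hγ.le] at this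
      have heq : γ * Qform b s t / Real.sqrt (Qform b s t)
          = γ * Real.sqrt (Qform b s t) := by
        rw [mul_div_assoc, Real.div_sqrt]
      rw [heq]
      exact ⟨by nlinarith, by nlinarith⟩
  · intro s t hQ
    have hM1 : (1:ℝ) ≤ Real.sqrt (max 1 b) := by
      have := Real.sqrt_le_sqrt (le_max_left 1 b)
      rwa [Real.sqrt_one] at this
    have hM0 : (0:ℝ) ≤ max 1 b := le_trans zero_le_one (le_max_left 1 b)
    have hQle : Qform b s t ≤ max 1 b * (s ^ 2 + t ^ 2) ^ 2 := by
      have h1 := mul_le_mul_of_nonneg_right (le_max_left 1 b)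
        (show (0:ℝ) ≤ s ^ 4 + t ^ 4 by positivity)
      have h2 := mul_le_mul_of_nonneg_right (le_max_right 1 b)
        (show (0:ℝ) ≤ 2 * s ^ 2 * t ^ 2 by positivity)
      unfold Qform
      nlinarith [h1, h2]
    have hsqrtle : Real.sqrt (Qform b s t) ≤ Real.sqrt (max 1 b) * (s ^ 2 + t ^ 2) := by
      calc Real.sqrt (Qform b s t) ≤ Real.sqrt (max 1 b * (s ^ 2 + t ^ 2) ^ 2) :=
            Real.sqrt_le_sqrt hQle
        _ = Real.sqrt (max 1 b) * (s ^ 2 + t ^ 2) := by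
            rw [Real.sqrt_mul hM0, Real.sqrt_sq (by positivity)]
    have heq : γ * ((s ^ 2 + b * t ^ 2) * s ^ 2 + (t ^ 2 + b * s ^ 2) * t ^ 2)
        / Real.sqrt (Qform b s t) = γ * Real.sqrt (Qform b s t) := by
      rw [hQid, mul_div_assoc, Real.div_sqrt]
    have hgrad : gradFsharpDot b γ s t = γ * Real.sqrt (Qform b s t) := by
      unfold gradFsharpDot
      by_cases h : Qform b s t ≤ γ ^ 2
      · have hQeq : Qform b s t = γ ^ 2 := le_antisymm h hQ
        rw [if_pos h, hQid, hQeq, Real.sqrt_sq hγ.le, sq]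
      · rw [if_neg h, hQid, mul_div_assoc, Real.div_sqrt]
    constructor
    · rw [heq, hgrad]
    · rw [heq]
      have h3 : 0 ≤ γ * (Real.sqrt (max 1 b) * (s ^ 2 + t ^ 2)) := by positivity
      nlinarith [mul_le_mul_of_nonneg_left hsqrtle hγ.le]
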